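/- arXiv:1607.08274 — 3 statements merged into one kernel-verified Lean document; each statement's English description precedes it below -/
import Mathlib

section
/- Define q_r(x,h) = ∫ t^r K(t) ∫₀¹ (f^{(r)}(x - h t w) - f^{(r)}(x)) (1-w)^{r-1} dw dt. Then for almost every x, q_r(x,h) is finite for every h > 0 and q_r(x,h) → 0 as h → 0⁺. -/
open MeasureTheory Real Filter

/-! The inner integral `P(c) = ∫₀¹ (g(x - c w) - g(x)) (1 - w)^m dw`, with `g = f⁽ʳ⁾`, is continuous
in `c`, vanishes at `c = 0`, and is bounded in `c`: for `|c| ≤ 1` by the maximum of `|g|` near `x`,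
and for `|c| ≥ 1` because the average of `|g|` over the segment from `x - c` to `x` is at most
`‖g‖₁ / |c|`. Dominated convergence with the integrable majorant `|t|^r K(t) sup |P|` then shows
that `h ↦ ∫ t^r K(t) P(h t) dt` is continuous, hence tends to its value `0` at `h = 0`, at every
`x`. -/

section

variable {g : ℝ → ℝ}

theorem exists_bound_intervalIntegral_norm_comp_sub_mul (hgc : Continuous g)
    (hgi : Integrable g) (x : ℝ) : ∃ C, ∀ c, ∫ w in (0:ℝ)..1, ‖g (x - c * w)‖ ≤ C := by
  obtain ⟨B, hB⟩ := (isCompact_Icc (a := x - 1) (b := x + 1)).exists_bound_of_continuousOn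
    hgc.continuousOn
  refine ⟨max B (∫ y, ‖g y‖), fun c => ?_⟩
  rcases le_or_gt |c| 1 with hc | hc
  · have hmem : ∀ w ∈ Set.Icc (0:ℝ) 1, x - c * w ∈ Set.Icc (x - 1) (x + 1) := by
      intro w ⟨hw0, hw1⟩
      have : |c * w| ≤ 1 := by
        rw [abs_mul, abs_of_nonneg hw0]; nlinarith [abs_nonneg c]
      constructor <;> linarith [abs_le.mp this]
    calc ∫ w in (0:ℝ)..1, ‖g (x - c * w)‖ ≤ ∫ _ in (0:ℝ)..1, B := by
          refine intervalIntegral.integral_mono_on zero_le_one ?_ intervalIntegrable_const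
            fun w hw => hB _ (hmem w hw)
          exact (by fun_prop : Continuous fun w => ‖g (x - c * w)‖).intervalIntegrable _ _
      _ = B := by simp
      _ ≤ _ := le_max_left _ _
  · have hc0 : c ≠ 0 := by rintro rfl; norm_num at hc
    calc ∫ w in (0:ℝ)..1, ‖g (x - c * w)‖ = c⁻¹ * ∫ y in x - c..x, ‖g y‖ := by
          rw [intervalIntegral.integral_comp_sub_mul (fun y => ‖g y‖) hc0]
          simp
      _ ≤ |c⁻¹ * ∫ y in x - c..x, ‖g y‖| := le_abs_self _
      _ ≤ 1 * ∫ y, ‖g y‖ := by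
          rw [abs_mul, abs_inv]
          gcongr
          · exact inv_le_one_of_one_le₀ hc.le
          · calc |∫ y in x - c..x, ‖g y‖| ≤ ∫ y in Set.uIoc (x - c) x, ‖g y‖ := by
                  simpa using intervalIntegral.norm_integral_le_integral_norm_uIoc
                    (f := fun y => ‖g y‖) (a := x - c) (b := x) (μ := volume)
              _ ≤ ∫ y, ‖g y‖ :=
                  setIntegral_le_integral hgi.norm (ae_of_all _ fun _ => norm_nonneg _)
      _ ≤ _ := by rw [one_mul]; exact le_max_right _ _

theorem exists_bound_intervalIntegral_sub_mul_pow (hgc : Continuous g) (hgi : Integrable g)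
    (m : ℕ) (x : ℝ) :
    ∃ D, ∀ c, ‖∫ w in (0:ℝ)..1, (g (x - c * w) - g x) * (1 - w) ^ m‖ ≤ D := by
  obtain ⟨C, hC⟩ := exists_bound_intervalIntegral_norm_comp_sub_mul hgc hgi x
  refine ⟨C + ‖g x‖, fun c => ?_⟩
  calc ‖∫ w in (0:ℝ)..1, (g (x - c * w) - g x) * (1 - w) ^ m‖
      ≤ ∫ w in (0:ℝ)..1, ‖(g (x - c * w) - g x) * (1 - w) ^ m‖ :=
        intervalIntegral.norm_integral_le_integral_norm zero_le_one
    _ ≤ ∫ w in (0:ℝ)..1, (‖g (x - c * w)‖ + ‖g x‖) := by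
        refine intervalIntegral.integral_mono_on zero_le_one
          (Continuous.intervalIntegrable (by fun_prop) _ _)
          (Continuous.intervalIntegrable (by fun_prop) _ _) fun w ⟨hw0, hw1⟩ => ?_
        have hweight : ‖(1 - w) ^ m‖ ≤ 1 := by
          rw [norm_pow, Real.norm_of_nonneg (by linarith)]
          exact pow_le_one₀ (by linarith) (by linarith)
        calc ‖(g (x - c * w) - g x) * (1 - w) ^ m‖ ≤ ‖g (x - c * w) - g x‖ * 1 := by
              rw [norm_mul]; gcongr
          _ ≤ ‖g (x - c * w)‖ + ‖g x‖ := by rw [mul_one]; exact norm_sub_le _ _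
    _ = (∫ w in (0:ℝ)..1, ‖g (x - c * w)‖) + ‖g x‖ := by
        rw [intervalIntegral.integral_add (Continuous.intervalIntegrable (by fun_prop) _ _)
          intervalIntegrable_const]
        simp
    _ ≤ C + ‖g x‖ := by gcongr; exact hC c

theorem continuous_intervalIntegral_sub_mul_pow (hgc : Continuous g) (m : ℕ) (x : ℝ) :
    Continuous fun c => ∫ w in (0:ℝ)..1, (g (x - c * w) - g x) * (1 - w) ^ m :=
  intervalIntegral.continuous_parametric_intervalIntegral_of_continuous' (by fun_prop) _ _

end

theorem continuous_integral_mul_comp_mul {k P : ℝ → ℝ} {D : ℝ} (hk : Integrable k)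
    (hP : Continuous P) (hPD : ∀ c, ‖P c‖ ≤ D) :
    Continuous fun h => ∫ t, k t * P (h * t) := by
  refine continuous_of_dominated (bound := fun t => ‖k t‖ * D)
    (fun h => hk.aestronglyMeasurable.mul (by fun_prop : Continuous _).aestronglyMeasurable)
    (fun h => ae_of_all _ fun t => ?_) (hk.norm.mul_const D) (ae_of_all _ fun t => by fun_prop)
  rw [norm_mul]; gcongr; exact hPD _

theorem integrable_mul_comp_mul {k P : ℝ → ℝ} {D : ℝ} (hk : Integrable k)
    (hP : Continuous P) (hPD : ∀ c, ‖P c‖ ≤ D) (h : ℝ) :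
    Integrable fun t => k t * P (h * t) :=
  hk.mul_bdd (by fun_prop : Continuous _).aestronglyMeasurable (ae_of_all _ fun t => hPD _)

theorem integrable_pow_mul_of_integrable_abs_pow_mul {K : ℝ → ℝ} (r : ℕ) (hKnonneg : ∀ t, 0 ≤ K t)
    (hKmeas : Measurable K) (hKmom : Integrable (fun t => |t| ^ r * K t)) :
    Integrable fun t => t ^ r * K t :=
  hKmom.mono' (by fun_prop) (ae_of_all _ fun t => by
    rw [norm_mul, norm_pow, Real.norm_eq_abs, Real.norm_of_nonneg (hKnonneg t)])

theorem stmt2_general (K : ℝ → ℝ) (f : ℝ → ℝ) (r : ℕ)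
    (hKnonneg : ∀ t, 0 ≤ K t)
    (hKmeas : Measurable K)
    (hKmom : Integrable (fun t => |t| ^ r * K t))
    (hfdiff : ContDiff ℝ r f)
    (hfint : Integrable (iteratedDeriv r f)) :
    ∀ᵐ x : ℝ,
      (∀ h : ℝ, 0 < h →
        Integrable (fun t : ℝ => t ^ r * K t *
          ∫ w in (0:ℝ)..1,
            (iteratedDeriv r f (x - h * t * w) - iteratedDeriv r f x) * (1 - w) ^ (r - 1))) ∧
      Tendsto (fun h : ℝ =>
          ∫ t : ℝ, t ^ r * K t *
            ∫ w in (0:ℝ)..1,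
              (iteratedDeriv r f (x - h * t * w) - iteratedDeriv r f x) * (1 - w) ^ (r - 1))
        (nhdsWithin 0 (Set.Ioi 0)) (nhds 0) := by
  have hgc : Continuous (iteratedDeriv r f) := hfdiff.continuous_iteratedDeriv r le_rfl
  have hk := integrable_pow_mul_of_integrable_abs_pow_mul r hKnonneg hKmeas hKmom
  refine ae_of_all _ fun x => ?_
  obtain ⟨D, hD⟩ := exists_bound_intervalIntegral_sub_mul_pow hgc hfint (r - 1) x
  have hP := continuous_intervalIntegral_sub_mul_pow hgc (r - 1) x
  refine ⟨fun h _ => integrable_mul_comp_mul hk hP hD h, ?_⟩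
  simpa using
    ((continuous_integral_mul_comp_mul hk hP hD).tendsto 0).mono_left nhdsWithin_le_nhds

/-- with `q_r(x,h) = ∫ t^r K(t) ∫₀¹ (f⁽ʳ⁾(x-htw) - f⁽ʳ⁾(x))(1-w)^{r-1} dw dt`,
for almost every `x` the defining integrand is integrable (so `q_r(x,h)` is finite) for every
`h > 0`, and `q_r(x,h) → 0` as `h → 0⁺`. -/
theorem stmt2 (K : ℝ → ℝ) (f : ℝ → ℝ) (r : ℕ)
    (hr : 1 ≤ r)
    (hKnonneg : ∀ t, 0 ≤ K t)
    (hKmeas : Measurable K)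
    (hKtail : Tendsto (fun t => |t| ^ (r + 1) * K t) (cocompact ℝ) (nhds 0))
    (hKmom : Integrable (fun t => |t| ^ r * K t))
    (hKprob : ∫ t, K t = 1) (hKint : Integrable K)
    (hKsymm : ∀ t, K (-t) = K t)
    (hKmean : ∫ t, t * K t = 0)
    (hKvar : Integrable (fun t => t ^ 2 * K t))
    (hfdiff : ContDiff ℝ r f)
    (hfint : Integrable (iteratedDeriv r f)) :
    ∀ᵐ x : ℝ,
      (∀ h : ℝ, 0 < h →
        Integrable (fun t : ℝ => t ^ r * K t *
          ∫ w in (0:ℝ)..1,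
            (iteratedDeriv r f (x - h * t * w) - iteratedDeriv r f x) * (1 - w) ^ (r - 1))) ∧
      Tendsto (fun h : ℝ =>
          ∫ t : ℝ, t ^ r * K t *
            ∫ w in (0:ℝ)..1,
              (iteratedDeriv r f (x - h * t * w) - iteratedDeriv r f x) * (1 - w) ^ (r - 1))
        (nhdsWithin 0 (Set.Ioi 0)) (nhds 0) :=
  stmt2_general K f r hKnonneg hKmeas hKmom hfdiff hfint
end

section
/- Define r(x,h) = ∫ t K(t)² ∫₀¹ (f'(x - h t w) - f'(x)) dw dt. Then for almost every x, |r(x,h)| < ∞ for all h > 0, r(x,h) → 0 as h → 0⁺, and moreover lim_{h→0⁺} ∫ r(x,h) dx = 0. -/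
open MeasureTheory Real Filter Set

/-!
For fixed `x`, the inner average `g(s) = ∫₀¹ (f'(x - s w) - f'(x)) dw` is continuous, vanishes at
`s = 0` and is bounded: on `|s| ≤ 1` by compactness, and for `|s| ≥ 1` because it equals
`s⁻¹ ∫_{x-s}^{x} f' - f'(x)`, of size at most `‖f'‖₁ + |f'(x)|`. As `K² ≤ M K`, the integrand
`t K(t)² g(h t)` is dominated by a multiple of `|t| K(t)` uniformly in `h`, which gives
integrability and, by dominated convergence, `r(x, h) → 0`. Finally `∫ g dx = 0` by Fubini and
translation invariance of `∫ f'`, so a second Fubini (justified by `∫ |g| dx ≤ 2 ‖f'‖₁`) gives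
`∫ r(x, h) dx = 0` for every `h`.
-/

noncomputable def meanDeviation (φ : ℝ → ℝ) (x s : ℝ) : ℝ :=
  ∫ w in (0:ℝ)..1, (φ (x - s * w) - φ x)

section MeanDeviation

variable {φ : ℝ → ℝ}

theorem continuous_meanDeviation (hφ : Continuous φ) :
    Continuous fun p : ℝ × ℝ => meanDeviation φ p.1 p.2 :=
  intervalIntegral.continuous_parametric_intervalIntegral_of_continuous' (by fun_prop) 0 1

@[simp]
theorem meanDeviation_zero_right (x : ℝ) : meanDeviation φ x 0 = 0 := by
  simp [meanDeviation]

theorem abs_intervalIntegral_le_integral_abs (hφ : Integrable φ) (a b : ℝ) :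
    |∫ u in a..b, φ u| ≤ ∫ u, |φ u| :=
  calc |∫ u in a..b, φ u| ≤ ∫ u in uIoc a b, |φ u| := by
        simpa using intervalIntegral.norm_integral_le_integral_norm_uIoc (f := φ) (a := a) (b := b)
    _ ≤ ∫ u, |φ u| := setIntegral_le_integral hφ.abs (.of_forall fun _ => abs_nonneg _)

theorem abs_meanDeviation_le (hφc : Continuous φ) (hφi : Integrable φ) (x : ℝ) {s : ℝ}
    (hs : s ≠ 0) : |meanDeviation φ x s| ≤ (∫ u, |φ u|) / |s| + |φ x| := by
  have hmean : ∫ w in (0:ℝ)..1, φ (x - s * w) = s⁻¹ * ∫ u in x - s..x, φ u := by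
    simpa using intervalIntegral.integral_comp_sub_mul φ (a := 0) (b := 1) hs x
  rw [meanDeviation, intervalIntegral.integral_sub ((by fun_prop : Continuous fun w =>
    φ (x - s * w)).intervalIntegrable 0 1) intervalIntegrable_const, hmean]
  calc |s⁻¹ * (∫ u in x - s..x, φ u) - ∫ _ in (0:ℝ)..1, φ x|
      ≤ |s|⁻¹ * |∫ u in x - s..x, φ u| + |φ x| := by
        simpa [abs_mul] using abs_sub (s⁻¹ * ∫ u in x - s..x, φ u) (φ x)
    _ ≤ |s|⁻¹ * (∫ u, |φ u|) + |φ x| := by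
        gcongr; exact abs_intervalIntegral_le_integral_abs hφi _ _
    _ = (∫ u, |φ u|) / |s| + |φ x| := by ring

theorem exists_abs_meanDeviation_le (hφc : Continuous φ) (hφi : Integrable φ) (x : ℝ) :
    ∃ C, ∀ s, |meanDeviation φ x s| ≤ C := by
  obtain ⟨C, hC⟩ := (isCompact_Icc (a := -1) (b := 1)).exists_bound_of_continuousOn
    ((continuous_meanDeviation hφc).comp (Continuous.prodMk_right x)).continuousOn
  refine ⟨max C ((∫ u, |φ u|) + |φ x|), fun s => ?_⟩
  rcases le_or_gt |s| 1 with hs | hs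
  · exact (hC s (abs_le.1 hs)).trans (le_max_left _ _)
  · have hs0 : s ≠ 0 := abs_pos.1 (zero_lt_one.trans hs)
    refine (abs_meanDeviation_le hφc hφi x hs0).trans (le_max_of_le_right ?_)
    gcongr
    exact div_le_self (integral_nonneg fun _ => abs_nonneg _) hs.le

theorem integral_abs_sub_comp_sub_right_le (hφ : Integrable φ) (a : ℝ) :
    ∫ x, |φ (x - a) - φ x| ≤ 2 * ∫ u, |φ u| :=
  calc ∫ x, |φ (x - a) - φ x| ≤ ∫ x, (|φ (x - a)| + |φ x|) :=
        integral_mono (hφ.comp_sub_right a |>.sub hφ).abs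
          ((hφ.comp_sub_right a).abs.add hφ.abs) fun x => abs_sub _ _
    _ = 2 * ∫ u, |φ u| := by
        rw [integral_add (hφ.comp_sub_right a).abs hφ.abs,
          integral_sub_right_eq_self (fun x => |φ x|) a]
        ring

theorem integrable_meanDeviation_integrand (hφc : Continuous φ) (hφi : Integrable φ) (s : ℝ) :
    Integrable (fun p : ℝ × ℝ => φ (p.1 - s * p.2) - φ p.1)
      (volume.prod (volume.restrict (Ioc 0 1))) := by
  refine (integrable_prod_iff' (by fun_prop : Continuous fun p : ℝ × ℝ =>
    φ (p.1 - s * p.2) - φ p.1).aestronglyMeasurable).2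
    ⟨.of_forall fun w => hφi.comp_sub_right (s * w) |>.sub hφi, ?_⟩
  refine Integrable.mono' (integrable_const (2 * ∫ u, |φ u|))
    ((by fun_prop : Continuous fun p : ℝ × ℝ => φ (p.1 - s * p.2) - φ p.1).aestronglyMeasurable
      |>.norm.prod_swap.integral_prod_right') (.of_forall fun w => ?_)
  rw [norm_of_nonneg (integral_nonneg fun _ => norm_nonneg _)]
  exact integral_abs_sub_comp_sub_right_le hφi (s * w)

theorem integrable_meanDeviation (hφc : Continuous φ) (hφi : Integrable φ) (s : ℝ) :
    Integrable fun x => meanDeviation φ x s := by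
  simpa only [meanDeviation, intervalIntegral.integral_of_le zero_le_one] using
    (integrable_meanDeviation_integrand hφc hφi s).integral_prod_left

theorem integral_meanDeviation_eq_zero (hφc : Continuous φ) (hφi : Integrable φ) (s : ℝ) :
    ∫ x, meanDeviation φ x s = 0 := by
  simp_rw [meanDeviation, intervalIntegral.integral_of_le zero_le_one]
  rw [integral_integral_swap (integrable_meanDeviation_integrand hφc hφi s)]
  simp [integral_sub (hφi.comp_sub_right _) hφi, integral_sub_right_eq_self]

theorem integral_abs_meanDeviation_le (hφc : Continuous φ) (hφi : Integrable φ) (s : ℝ) :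
    ∫ x, |meanDeviation φ x s| ≤ 2 * ∫ u, |φ u| := by
  have hF := (integrable_meanDeviation_integrand hφc hφi s).norm
  calc ∫ x, |meanDeviation φ x s|
      ≤ ∫ x, ∫ w in Ioc (0:ℝ) 1, |φ (x - s * w) - φ x| := by
        refine integral_mono (integrable_meanDeviation hφc hφi s).abs hF.integral_prod_left
          fun x => ?_
        simpa [meanDeviation, intervalIntegral.integral_of_le zero_le_one] using
          norm_integral_le_integral_norm (μ := volume.restrict (Ioc (0:ℝ) 1))
            (fun w => φ (x - s * w) - φ x)
    _ = ∫ w in Ioc (0:ℝ) 1, ∫ x, |φ (x - s * w) - φ x| := integral_integral_swap hF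
    _ ≤ ∫ w in Ioc (0:ℝ) 1, 2 * ∫ u, |φ u| :=
        setIntegral_mono_on hF.integral_prod_right (integrableOn_const (by simp)) measurableSet_Ioc
          fun w _ => integral_abs_sub_comp_sub_right_le hφi (s * w)
    _ = 2 * ∫ u, |φ u| := by simp

end MeanDeviation

section Kernel

variable {K : ℝ → ℝ} {M : ℝ}

theorem abs_mul_sq_mul_le (hK0 : ∀ t, 0 ≤ K t) (hKM : ∀ t, K t ≤ M) {c C : ℝ} (hc : |c| ≤ C)
    (t : ℝ) : |t * K t ^ 2 * c| ≤ M * C * (|t| * K t) := by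
  have hK2 : K t ^ 2 ≤ M * K t := by nlinarith [hK0 t, hKM t]
  have hM : 0 ≤ M := (hK0 t).trans (hKM t)
  rw [abs_mul, abs_mul, abs_of_nonneg (sq_nonneg (K t))]
  calc |t| * K t ^ 2 * |c| ≤ |t| * (M * K t) * C :=
        mul_le_mul (by gcongr) hc (abs_nonneg c) (by have := hK0 t; positivity)
    _ = M * C * (|t| * K t) := by ring

theorem integrable_mul_sq_mul (hKm : Measurable K) (hK0 : ∀ t, 0 ≤ K t) (hKM : ∀ t, K t ≤ M)
    (hKmom : Integrable fun t => |t| * K t) {G : ℝ → ℝ} (hG : AEStronglyMeasurable G) {C : ℝ}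
    (hGC : ∀ t, |G t| ≤ C) : Integrable fun t => t * K t ^ 2 * G t :=
  (hKmom.const_mul (M * C)).mono' (by fun_prop)
    (.of_forall fun t => abs_mul_sq_mul_le hK0 hKM (hGC t) t)

theorem tendsto_integral_mul_sq_mul_comp_mul (hKm : Measurable K) (hK0 : ∀ t, 0 ≤ K t)
    (hKM : ∀ t, K t ≤ M) (hKmom : Integrable fun t => |t| * K t) {G : ℝ → ℝ}
    (hG : Continuous G) (hG0 : G 0 = 0) {C : ℝ} (hGC : ∀ s, |G s| ≤ C) :
    Tendsto (fun h => ∫ t, t * K t ^ 2 * G (h * t)) (nhds 0) (nhds 0) := by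
  have hlim := tendsto_integral_filter_of_dominated_convergence (fun t => M * C * (|t| * K t))
    (.of_forall fun h => by fun_prop) (.of_forall fun h => .of_forall fun t =>
      abs_mul_sq_mul_le hK0 hKM (hGC (h * t)) t) (hKmom.const_mul (M * C))
    (.of_forall fun t => (by fun_prop : Continuous fun h => t * K t ^ 2 * G (h * t)).tendsto 0)
  simpa [hG0] using hlim

theorem integral_integral_mul_sq_meanDeviation_eq_zero {φ : ℝ → ℝ} (hKm : Measurable K)
    (hK0 : ∀ t, 0 ≤ K t) (hKM : ∀ t, K t ≤ M) (hKmom : Integrable fun t => |t| * K t)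
    (hφc : Continuous φ) (hφi : Integrable φ) (h : ℝ) :
    ∫ x, ∫ t, t * K t ^ 2 * meanDeviation φ x (h * t) = 0 := by
  set F : ℝ × ℝ → ℝ := fun p => p.2 * K p.2 ^ 2 * meanDeviation φ p.1 (h * p.2)
  have hFm : AEStronglyMeasurable F (volume.prod volume) := by
    have hg : Continuous fun p : ℝ × ℝ => meanDeviation φ p.1 (h * p.2) :=
      (continuous_meanDeviation hφc).comp (.prodMk continuous_fst (continuous_snd.const_mul h))
    exact (measurable_snd.mul ((hKm.comp measurable_snd).pow_const 2)).aestronglyMeasurable.mul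
      hg.aestronglyMeasurable
  have hF : Integrable F (volume.prod volume) := by
    refine (integrable_prod_iff' hFm).2 ⟨.of_forall fun t =>
      (integrable_meanDeviation hφc hφi (h * t)).const_mul (t * K t ^ 2), ?_⟩
    refine (hKmom.const_mul (M * (2 * ∫ u, |φ u|))).mono'
      hFm.norm.prod_swap.integral_prod_right' (.of_forall fun t => ?_)
    have hnonneg : 0 ≤ ∫ x, |meanDeviation φ x (h * t)| := integral_nonneg fun _ => abs_nonneg _
    simpa [F, abs_mul, integral_const_mul, abs_of_nonneg hnonneg] using
      abs_mul_sq_mul_le hK0 hKM ((abs_of_nonneg hnonneg).trans_le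
        (integral_abs_meanDeviation_le hφc hφi (h * t))) t
  rw [integral_integral_swap hF]
  simp [integral_const_mul, integral_meanDeviation_eq_zero hφc hφi]

end Kernel

theorem stmt3_general (K : ℝ → ℝ) (f : ℝ → ℝ) (M : ℝ)
    (hKnonneg : ∀ t, 0 ≤ K t)
    (hKmeas : Measurable K)
    (hKbd : ∀ t, K t ≤ M)
    (hKmom : Integrable (fun t => |t| * K t))
    (hfcont : Continuous (deriv f))
    (hfint : Integrable (deriv f)) :
    (∀ᵐ x : ℝ,
      (∀ h : ℝ, 0 < h →
        Integrable (fun t : ℝ => t * (K t) ^ 2 *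
          ∫ w in (0:ℝ)..1, (deriv f (x - h * t * w) - deriv f x))) ∧
      Tendsto (fun h : ℝ =>
          ∫ t : ℝ, t * (K t) ^ 2 * ∫ w in (0:ℝ)..1, (deriv f (x - h * t * w) - deriv f x))
        (nhdsWithin 0 (Set.Ioi 0)) (nhds 0)) ∧
    Tendsto (fun h : ℝ =>
        ∫ x : ℝ, ∫ t : ℝ, t * (K t) ^ 2 *
          ∫ w in (0:ℝ)..1, (deriv f (x - h * t * w) - deriv f x))
      (nhdsWithin 0 (Set.Ioi 0)) (nhds 0) := by
  refine ⟨.of_forall fun x => ?_, ?_⟩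
  · obtain ⟨C, hC⟩ := exists_abs_meanDeviation_le hfcont hfint x
    have hG : Continuous (meanDeviation (deriv f) x) :=
      (continuous_meanDeviation hfcont).comp (Continuous.prodMk_right x)
    exact ⟨fun h _ => integrable_mul_sq_mul hKmeas hKnonneg hKbd hKmom
        (hG.comp (continuous_const_mul h)).aestronglyMeasurable fun t => hC (h * t),
      (tendsto_integral_mul_sq_mul_comp_mul hKmeas hKnonneg hKbd hKmom hG
        (meanDeviation_zero_right x) hC).mono_left nhdsWithin_le_nhds⟩
  · exact tendsto_const_nhds.congr fun h => (integral_integral_mul_sq_meanDeviation_eq_zero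
      hKmeas hKnonneg hKbd hKmom hfcont hfint h).symm

/-- with `r(x,h) = ∫ t K(t)² ∫₀¹ (f'(x-htw) - f'(x)) dw dt`, for almost every
`x` the defining integrand is integrable (so `|r(x,h)| < ∞`) for all `h > 0` and
`r(x,h) → 0` as `h → 0⁺`; moreover `∫ r(x,h) dx → 0` as `h → 0⁺`. -/
theorem stmt3 (K : ℝ → ℝ) (f : ℝ → ℝ) (M : ℝ)
    (hKnonneg : ∀ t, 0 ≤ K t)
    (hKmeas : Measurable K)
    (hKbd : ∀ t, K t ≤ M)
    (hKtail : Tendsto (fun t => |t| ^ 2 * K t) (cocompact ℝ) (nhds 0))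
    (hKmom : Integrable (fun t => |t| * K t))
    (hKprob : ∫ t, K t = 1) (hKint : Integrable K)
    (hKsymm : ∀ t, K (-t) = K t)
    (hKmean : ∫ t, t * K t = 0)
    (hKvar : Integrable (fun t => t ^ 2 * K t))
    (hfdiff : Differentiable ℝ f)
    (hfcont : Continuous (deriv f))
    (hfint : Integrable (deriv f)) :
    (∀ᵐ x : ℝ,
      (∀ h : ℝ, 0 < h →
        Integrable (fun t : ℝ => t * (K t) ^ 2 *
          ∫ w in (0:ℝ)..1, (deriv f (x - h * t * w) - deriv f x))) ∧
      Tendsto (fun h : ℝ =>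
          ∫ t : ℝ, t * (K t) ^ 2 * ∫ w in (0:ℝ)..1, (deriv f (x - h * t * w) - deriv f x))
        (nhdsWithin 0 (Set.Ioi 0)) (nhds 0)) ∧
    Tendsto (fun h : ℝ =>
        ∫ x : ℝ, ∫ t : ℝ, t * (K t) ^ 2 *
          ∫ w in (0:ℝ)..1, (deriv f (x - h * t * w) - deriv f x))
      (nhdsWithin 0 (Set.Ioi 0)) (nhds 0) :=
  stmt3_general K f M hKnonneg hKmeas hKbd hKmom hfcont hfint
end

section
/- Using Taylor's theorem with integral remainder, for Y with density f (differentiable, f' continuous and integrable) and bounded kernel K with ∫ |t| K(t) dt < ∞: E[K_h(x - Y)²] = h^{-1} R(K) f(x) - (∫ t K(t)² dt) f'(x) - r(x,h), where r(x,h) = ∫ t K(t)² ∫₀¹ (f'(x - h t w) - f'(x)) dw dt and R(K) = ∫ K². Consequently E[K_h(x - Y)²] = h^{-1} R(K) f(x) + O(1) as h → 0⁺ for almost every x. -/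
/-!
Substituting `y = x - h t` gives `E[K_h(x - Y)²] = h⁻¹ ∫ K(t)² f(x - h t) dt`, and the
fundamental theorem of calculus `f x - f (x - h t) = h t ∫₀¹ f'(x - h t w) dw` turns the
difference with `h⁻¹ R(K) f(x)` into the stated remainder. For the `O(1)` bound, `f` is
Lipschitz near `x` (mean value theorem) and bounded (its derivative is integrable), so
`|f x - f (x - s)| ≤ C |s|` for all `s`; hence the integrand of
`h⁻¹ ∫ K² (f x - f (x - h t))` is dominated by `M C |t| K(t)` uniformly in `h > 0`, at every `x`.
-/

open MeasureTheory Real Filter Asymptotics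

lemma integral_comp_sub_div_of_pos (g : ℝ → ℝ) (x : ℝ) {h : ℝ} (hh : 0 < h) :
    ∫ y, g ((x - y) / h) = h * ∫ t, g t := by
  rw [integral_sub_left_eq_self (fun u => g (u / h)) volume x, Measure.integral_comp_div,
    abs_of_pos hh, smul_eq_mul]

lemma integral_sq_scaled_kernel_mul (K f : ℝ → ℝ) (x : ℝ) {h : ℝ} (hh : 0 < h) :
    ∫ y, ((1 / h) * K ((x - y) / h)) ^ 2 * f y = h⁻¹ * ∫ t, K t ^ 2 * f (x - h * t) := by
  have hy : ∀ y, ((1 / h) * K ((x - y) / h)) ^ 2 * f y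
      = h⁻¹ ^ 2 * (K ((x - y) / h) ^ 2 * f (x - h * ((x - y) / h))) := by
    intro y
    rw [mul_div_cancel₀ _ hh.ne', sub_sub_cancel]
    ring
  simp_rw [hy]
  rw [integral_const_mul, integral_comp_sub_div_of_pos (fun t => K t ^ 2 * f (x - h * t)) x hh]
  field_simp

lemma sub_comp_sub_eq_mul_integral_deriv {f : ℝ → ℝ} (hf : Differentiable ℝ f)
    (hf' : Continuous (deriv f)) (x c : ℝ) :
    f x - f (x - c) = c * ∫ w in (0 : ℝ)..1, deriv f (x - c * w) := by
  rcases eq_or_ne c 0 with rfl | hc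
  · simp
  rw [intervalIntegral.integral_comp_sub_mul _ hc, mul_one, mul_zero, sub_zero, smul_eq_mul,
    mul_inv_cancel_left₀ hc,
    intervalIntegral.integral_deriv_eq_sub (fun t _ => hf t) (hf'.intervalIntegrable _ _)]

lemma abs_sub_le_integral_abs_deriv {f : ℝ → ℝ} (hf : Differentiable ℝ f)
    (hf' : Integrable (deriv f)) (a b : ℝ) :
    |f b - f a| ≤ ∫ t, |deriv f t| := by
  rw [← intervalIntegral.integral_deriv_eq_sub (fun t _ => hf t) hf'.intervalIntegrable]
  simp_rw [← Real.norm_eq_abs]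
  calc ‖∫ t in a..b, deriv f t‖ ≤ ∫ t in Set.uIoc a b, ‖deriv f t‖ :=
        intervalIntegral.norm_integral_le_integral_norm_uIoc
    _ ≤ ∫ t, ‖deriv f t‖ :=
        setIntegral_le_integral hf'.norm (ae_of_all _ fun _ => norm_nonneg _)

lemma abs_le_mul_abs_of_locally_le_of_bounded {φ : ℝ → ℝ} {L B : ℝ}
    (hloc : ∀ s, |s| ≤ 1 → |φ s| ≤ L * |s|) (hbdd : ∀ s, |φ s| ≤ B) (s : ℝ) :
    |φ s| ≤ (L + B) * |s| := by
  have hL : 0 ≤ L := by simpa using (abs_nonneg _).trans (hloc 1 (by simp))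
  have hB : 0 ≤ B := (abs_nonneg _).trans (hbdd 0)
  rcases le_total |s| 1 with hs | hs
  · nlinarith [hloc s hs, abs_nonneg s]
  · nlinarith [hbdd s]

lemma exists_abs_sub_le_mul_abs {f : ℝ → ℝ} (hf : Differentiable ℝ f)
    (hf' : Continuous (deriv f)) (hf'int : Integrable (deriv f)) (x : ℝ) :
    ∃ C, ∀ s, |f x - f (x - s)| ≤ C * |s| := by
  obtain ⟨L, hL⟩ := isCompact_Icc.exists_bound_of_continuousOn
    (s := Set.Icc (x - 1) (x + 1)) hf'.continuousOn
  refine ⟨_, abs_le_mul_abs_of_locally_le_of_bounded (L := L) (fun s hs => ?_)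
    (fun s => abs_sub_le_integral_abs_deriv hf hf'int (x - s) x)⟩
  obtain ⟨hs₁, hs₂⟩ := abs_le.mp hs
  have hmvt := (convex_Icc (x - 1) (x + 1)).norm_image_sub_le_of_norm_deriv_le
    (fun y _ => hf y) hL (x := x) (y := x - s) ⟨by linarith, by linarith⟩
    ⟨by linarith, by linarith⟩
  rwa [sub_sub_cancel_left, norm_neg, norm_sub_rev] at hmvt

lemma abs_inv_mul_sq_mul_le {k M C h t v : ℝ} (hk : 0 ≤ k) (hkM : k ≤ M) (hh : 0 < h)
    (hv : |v| ≤ C * |h * t|) :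
    |h⁻¹ * (k ^ 2 * v)| ≤ M * C * (|t| * k) := by
  rw [abs_mul h, abs_of_pos hh] at hv
  have hCt : 0 ≤ C * |t| := by nlinarith [abs_nonneg v]
  calc |h⁻¹ * (k ^ 2 * v)| = h⁻¹ * k ^ 2 * |v| := by
        rw [abs_mul, abs_mul, abs_of_pos (inv_pos.mpr hh), abs_of_nonneg (sq_nonneg k), mul_assoc]
    _ ≤ h⁻¹ * k ^ 2 * (C * (h * |t|)) := by gcongr
    _ = k * k * (C * |t|) := by field_simp
    _ ≤ M * k * (C * |t|) := by gcongr
    _ = M * C * (|t| * k) := by ring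

section Kernel

variable {K : ℝ → ℝ} {M : ℝ}

lemma integrable_sq_of_le (hK : Integrable K) (hKmeas : Measurable K) (hK0 : ∀ t, 0 ≤ K t)
    (hKM : ∀ t, K t ≤ M) : Integrable fun t => K t ^ 2 := by
  simpa only [sq] using hK.bdd_mul hKmeas.aestronglyMeasurable
    (ae_of_all _ fun t => (norm_of_nonneg (hK0 t)).trans_le (hKM t))

lemma integrable_mul_sq_of_le (hK : Integrable fun t => |t| * K t) (hKmeas : Measurable K)
    (hK0 : ∀ t, 0 ≤ K t) (hKM : ∀ t, K t ≤ M) : Integrable fun t => t * K t ^ 2 := by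
  have htK : Integrable fun t => t * K t :=
    hK.mono (by fun_prop) (ae_of_all _ fun t => by simp [abs_of_nonneg (hK0 t)])
  simpa only [sq, mul_assoc] using htK.mul_bdd hKmeas.aestronglyMeasurable
    (ae_of_all _ fun t => (norm_of_nonneg (hK0 t)).trans_le (hKM t))

end Kernel

section

variable {K f : ℝ → ℝ} {x h : ℝ}

lemma integral_sq_scaled_kernel_mul_eq (hK : Integrable fun t => K t ^ 2)
    (hG : Integrable fun t => K t ^ 2 * (f x - f (x - h * t))) (hh : 0 < h) :
    ∫ y, ((1 / h) * K ((x - y) / h)) ^ 2 * f y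
      = h⁻¹ * (∫ u, K u ^ 2) * f x - h⁻¹ * ∫ t, K t ^ 2 * (f x - f (x - h * t)) := by
  have hsplit : (fun t => K t ^ 2 * f (x - h * t))
      = fun t => K t ^ 2 * f x - K t ^ 2 * (f x - f (x - h * t)) := by
    funext t; ring
  rw [integral_sq_scaled_kernel_mul K f x hh, hsplit, integral_sub (hK.mul_const _) hG,
    integral_mul_const]
  ring

lemma integral_mul_integral_deriv_sub_eq (hf : Differentiable ℝ f) (hf' : Continuous (deriv f))
    (hK : Integrable fun t => t * K t ^ 2)
    (hG : Integrable fun t => K t ^ 2 * (f x - f (x - h * t))) (hh : h ≠ 0) :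
    ∫ t, t * K t ^ 2 * ∫ w in (0 : ℝ)..1, (deriv f (x - h * t * w) - deriv f x)
      = h⁻¹ * (∫ t, K t ^ 2 * (f x - f (x - h * t))) - (∫ t, t * K t ^ 2) * deriv f x := by
  have hpt : ∀ t, t * K t ^ 2 * ∫ w in (0 : ℝ)..1, (deriv f (x - h * t * w) - deriv f x)
      = h⁻¹ * (K t ^ 2 * (f x - f (x - h * t))) - t * K t ^ 2 * deriv f x := by
    intro t
    have hcont : Continuous fun w => deriv f (x - h * t * w) := by fun_prop
    rw [intervalIntegral.integral_sub (hcont.intervalIntegrable _ _) intervalIntegrable_const,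
      sub_comp_sub_eq_mul_integral_deriv hf hf' x (h * t)]
    simp only [intervalIntegral.integral_const, sub_zero, one_smul]
    field_simp
  simp_rw [hpt]
  rw [integral_sub (hG.const_mul _) (hK.mul_const _), integral_const_mul, integral_mul_const]

end

theorem stmt11_general (K : ℝ → ℝ) (f : ℝ → ℝ) (M : ℝ)
    (hKmeas : Measurable K) (hKnonneg : ∀ t, 0 ≤ K t)
    (hKbd : ∀ t, K t ≤ M)
    (hKabs : Integrable (fun t => |t| * K t))
    (hKint : Integrable K)
    (hfdiff : Differentiable ℝ f)
    (hf'cont : Continuous (deriv f))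
    (hf'int : Integrable (deriv f)) :
    ∀ᵐ x : ℝ,
      (∀ h : ℝ, 0 < h →
        (∫ y, ((1 / h) * K ((x - y) / h)) ^ 2 * f y) =
          h⁻¹ * (∫ u, (K u) ^ 2) * f x - (∫ t, t * (K t) ^ 2) * deriv f x -
            ∫ t, t * (K t) ^ 2 * ∫ w in (0:ℝ)..1, (deriv f (x - h * t * w) - deriv f x)) ∧
      (fun h : ℝ =>
          (∫ y, ((1 / h) * K ((x - y) / h)) ^ 2 * f y) - h⁻¹ * (∫ u, (K u) ^ 2) * f x)
        =O[nhdsWithin 0 (Set.Ioi 0)] (fun _ => (1 : ℝ)) := by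
  have hK2 := integrable_sq_of_le hKint hKmeas hKnonneg hKbd
  have htK2 := integrable_mul_sq_of_le hKabs hKmeas hKnonneg hKbd
  refine ae_of_all _ fun x => ?_
  obtain ⟨C, hC⟩ := exists_abs_sub_le_mul_abs hfdiff hf'cont hf'int x
  have hbound : ∀ h, 0 < h → ∀ t,
      ‖h⁻¹ * (K t ^ 2 * (f x - f (x - h * t)))‖ ≤ M * C * (|t| * K t) :=
    fun h hh t => abs_inv_mul_sq_mul_le (hKnonneg t) (hKbd t) hh (hC _)
  have hG : ∀ h, 0 < h → Integrable fun t => K t ^ 2 * (f x - f (x - h * t)) := by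
    intro h hh
    have hmeas : Measurable fun t => K t ^ 2 * (f x - f (x - h * t)) := by
      have := hfdiff.continuous.measurable
      fun_prop
    refine (integrable_const_mul_iff (isUnit_iff_ne_zero.mpr (inv_ne_zero hh.ne')) _).mp ?_
    exact (hKabs.const_mul (M * C)).mono' (hmeas.const_mul _).aestronglyMeasurable
      (ae_of_all _ (hbound h hh))
  refine ⟨fun h hh => ?_, ?_⟩
  · rw [integral_sq_scaled_kernel_mul_eq hK2 (hG h hh) hh,
      integral_mul_integral_deriv_sub_eq hfdiff hf'cont htK2 (hG h hh) hh.ne']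
    ring
  · refine IsBigO.of_bound (M * C * ∫ t, |t| * K t)
      (eventually_nhdsWithin_of_forall fun h hh => ?_)
    rw [integral_sq_scaled_kernel_mul_eq hK2 (hG h hh) hh, norm_one, mul_one,
      sub_sub_cancel_left, norm_neg, ← integral_const_mul, ← integral_const_mul]
    exact norm_integral_le_of_norm_le (hKabs.const_mul _) (ae_of_all _ (hbound h hh))

/-- with `K_h(u) = K(u/h)/h` and `Y` having density `f`, so that
`E[K_h(x-Y)²] = ∫ K_h(x-y)² f(y) dy`, for almost every `x` one has, for every `h > 0`,
`E[K_h(x-Y)²] = h⁻¹ R(K) f(x) - (∫ t K(t)² dt) f'(x) - r(x,h)` where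
`r(x,h) = ∫ t K(t)² ∫₀¹ (f'(x-htw) - f'(x)) dw dt`; consequently
`E[K_h(x-Y)²] - h⁻¹ R(K) f(x) = O(1)` as `h → 0⁺`. -/
theorem stmt11 (K : ℝ → ℝ) (f : ℝ → ℝ) (M : ℝ)
    (hKmeas : Measurable K) (hKnonneg : ∀ t, 0 ≤ K t)
    (hKbd : ∀ t, K t ≤ M)
    (hKtail : Tendsto (fun t => |t| ^ 2 * K t) (cocompact ℝ) (nhds 0))
    (hKabs : Integrable (fun t => |t| * K t))
    (hKint : Integrable K)
    (hfmeas : Measurable f) (hfnonneg : ∀ y, 0 ≤ f y) (hfprob : ∫ y, f y = 1)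
    (hfdiff : Differentiable ℝ f)
    (hf'cont : Continuous (deriv f))
    (hf'int : Integrable (deriv f)) :
    ∀ᵐ x : ℝ,
      (∀ h : ℝ, 0 < h →
        (∫ y, ((1 / h) * K ((x - y) / h)) ^ 2 * f y) =
          h⁻¹ * (∫ u, (K u) ^ 2) * f x - (∫ t, t * (K t) ^ 2) * deriv f x -
            ∫ t, t * (K t) ^ 2 * ∫ w in (0:ℝ)..1, (deriv f (x - h * t * w) - deriv f x)) ∧
      (fun h : ℝ =>
          (∫ y, ((1 / h) * K ((x - y) / h)) ^ 2 * f y) - h⁻¹ * (∫ u, (K u) ^ 2) * f x)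
        =O[nhdsWithin 0 (Set.Ioi 0)] (fun _ => (1 : ℝ)) :=
  stmt11_general K f M hKmeas hKnonneg hKbd hKabs hKint hfdiff hf'cont hf'int
end
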